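/- arXiv:2005.12746 — 5 statements merged into one kernel-verified Lean document; each statement's English description precedes it below -/
import Mathlib

section
/- Let A be a nonzero N×N real matrix and let R = rank(A^N). Then for any integers p, q with N ≤ p ≤ q, there exist real numbers α_1, ..., α_R such that A^p = A^q · Σ_{i=1}^{R} α_i A^i. -/
/-!
Let `f` be `A` acting on `ℝ^N` and `W = f^N(ℝ^N)`, a space of dimension `R`. The ranges of the
powers of `f` have stabilised by step `N`, so `f` restricts to an automorphism of `W`. By
Cayley–Hamilton for this restriction, whose characteristic polynomial has degree `R` and nonzero
constant term, `(f|W)^{-(q-p+1)} = g(f|W)` for a polynomial `g` of degree `< R`. As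
`f^p(ℝ^N) ⊆ W`, this gives `f^p = f^(q-p+1) g(f) f^p = f^q · f g(f)`.
-/

open Polynomial Module

theorem Polynomial.aeval_restrict_apply {R M : Type*} [CommSemiring R] [AddCommMonoid M]
    [Module R M] (f : Module.End R M) {p : Submodule R M} (h : ∀ x ∈ p, f x ∈ p) (q : R[X])
    (x : p) : (aeval (f.restrict h) q x : M) = aeval f q (x : M) := by
  induction q using Polynomial.induction_on' with
  | add a b ha hb => simp [ha, hb]
  | monomial n a =>
    simp only [aeval_monomial, Module.End.mul_apply, Module.End.pow_restrict n h]
    simp [LinearMap.restrict_apply]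

theorem Polynomial.aeval_eq_sum_range_of_degree_lt {R S : Type*} [CommSemiring R] [Semiring S]
    [Algebra R S] {p : R[X]} {n : ℕ} (hn : p.degree < n) (x : S) :
    aeval x p = ∑ i ∈ Finset.range n, p.coeff i • x ^ i := by
  rcases eq_or_ne p 0 with rfl | hp
  · simp
  · exact aeval_eq_sum_range' ((natDegree_lt_iff_degree_lt hp).2 hn) x

theorem Polynomial.exists_degree_lt_aeval_X_pow_mul_eq_one {R A : Type*} [CommRing R]
    [Nontrivial R] [Ring A] [Algebra R A] {x : A} {χ : R[X]} (hχ : χ.Monic)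
    (hx : aeval x χ = 0) (h0 : IsUnit (χ.coeff 0)) (m : ℕ) :
    ∃ g : R[X], g.degree < χ.degree ∧ aeval x (X ^ m * g) = 1 := by
  obtain ⟨u, hu⟩ := h0
  -- `χ = X χ.divX + χ(0)`, so `E(x) = -χ(0)⁻¹ χ.divX(x)` inverts `x`; reduce `E ^ m` modulo `χ`.
  set E : R[X] := -C (↑u⁻¹ : R) * χ.divX
  have hXE : X * E = 1 - C (↑u⁻¹ : R) * χ := by
    have hC : C (↑u⁻¹ : R) * C (χ.coeff 0) = (1 : R[X]) := by
      rw [← hu, ← C_mul, Units.inv_mul, C_1]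
    linear_combination hC - C (↑u⁻¹ : R) * X_mul_divX_add χ
  refine ⟨E ^ m %ₘ χ, degree_modByMonic_lt _ hχ, ?_⟩
  rw [map_mul, aeval_modByMonic_eq_self_of_root hx, ← map_mul, ← mul_pow, hXE, map_pow,
    map_sub, map_mul, hx, mul_zero, sub_zero, map_one, one_pow]

theorem Module.End.exists_degree_lt_aeval_X_pow_mul_eq_one {R M : Type*} [CommRing R]
    [StrongRankCondition R] [AddCommGroup M] [Module R M] [Module.Free R M] [Module.Finite R M]
    {f : Module.End R M} (hf : IsUnit f) (m : ℕ) :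
    ∃ g : R[X], g.degree < finrank R M ∧ aeval f (X ^ m * g) = 1 := by
  have h0 : IsUnit (f.charpoly.coeff 0) := by
    have := LinearMap.isUnit_det f hf
    rw [LinearMap.det_eq_sign_charpoly_coeff] at this
    exact isUnit_of_mul_isUnit_right this
  have := nontrivial_of_invariantBasisNumber R
  rw [← f.charpoly_natDegree, ← degree_eq_natDegree f.charpoly_monic.ne_zero]
  exact Polynomial.exists_degree_lt_aeval_X_pow_mul_eq_one f.charpoly_monic
    f.aeval_self_charpoly h0 m

namespace Module.End

section DivisionRing

variable {K V : Type*} [DivisionRing K] [AddCommGroup V] [Module K V]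

theorem apply_mem_range_pow_of_mem (f : End K V) (k : ℕ) :
    ∀ x ∈ LinearMap.range (f ^ k), f x ∈ LinearMap.range (f ^ k) := by
  rintro _ ⟨y, rfl⟩
  exact ⟨f y, by rw [← mul_apply, ← pow_succ, pow_succ', mul_apply]⟩

theorem range_pow_le_range_pow (f : End K V) {m n : ℕ} (h : m ≤ n) :
    LinearMap.range (f ^ n) ≤ LinearMap.range (f ^ m) := by
  rw [← Nat.add_sub_cancel' h, pow_add, mul_eq_comp]
  exact LinearMap.range_comp_le_range _ _

variable [FiniteDimensional K V]

theorem range_pow_finrank_succ (f : End K V) :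
    LinearMap.range (f ^ (finrank K V + 1)) = LinearMap.range (f ^ finrank K V) := by
  refine Submodule.eq_of_le_of_finrank_eq (f.range_pow_le_range_pow (Nat.le_succ _)) ?_
  have h₁ := LinearMap.finrank_range_add_finrank_ker (f ^ (finrank K V + 1))
  have h₂ := LinearMap.finrank_range_add_finrank_ker (f ^ finrank K V)
  rw [ker_pow_eq_ker_pow_finrank_of_le (Nat.le_succ _)] at h₁
  omega

theorem isUnit_restrict_range_pow_finrank (f : End K V) :
    IsUnit (f.restrict (f.apply_mem_range_pow_of_mem (finrank K V))) := by
  rw [isUnit_iff]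
  suffices h : Function.Surjective (f.restrict (f.apply_mem_range_pow_of_mem (finrank K V))) from
    ⟨LinearMap.injective_iff_surjective.2 h, h⟩
  rintro ⟨_, y, rfl⟩
  obtain ⟨z, hz⟩ : (f ^ finrank K V) y ∈ LinearMap.range (f ^ (finrank K V + 1)) := by
    rw [range_pow_finrank_succ]; exact ⟨y, rfl⟩
  refine ⟨⟨(f ^ finrank K V) z, z, rfl⟩, Subtype.ext ?_⟩
  change f ((f ^ finrank K V) z) = (f ^ finrank K V) y
  rw [← hz, pow_succ', mul_apply]

end DivisionRing

theorem exists_pow_eq_pow_mul_aeval {K V : Type*} [Field K] [AddCommGroup V] [Module K V]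
    [FiniteDimensional K V] (f : End K V) {p q : ℕ} (hp : finrank K V ≤ p) (hpq : p ≤ q) :
    ∃ g : K[X], g.degree < finrank K (LinearMap.range (f ^ finrank K V)) ∧
      f ^ p = f ^ q * (f * aeval f g) := by
  obtain ⟨c, rfl⟩ := Nat.exists_eq_add_of_le hpq
  obtain ⟨g, hdeg, hg⟩ :=
    exists_degree_lt_aeval_X_pow_mul_eq_one f.isUnit_restrict_range_pow_finrank (c + 1)
  have hcomm : f ^ (p + c) * (f * aeval f g) = aeval f (X ^ (c + 1) * g) * f ^ p :=
    calc f ^ (p + c) * (f * aeval f g) = aeval f (X ^ (p + c) * (X * g)) := by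
          simp only [map_mul, aeval_X_pow, aeval_X]
      _ = aeval f (X ^ (c + 1) * g * X ^ p) := by ring_nf
      _ = aeval f (X ^ (c + 1) * g) * f ^ p := by rw [map_mul _ _ (X ^ p), aeval_X_pow]
  refine ⟨g, hdeg, LinearMap.ext fun v => ?_⟩
  have hv : (f ^ p) v ∈ LinearMap.range (f ^ finrank K V) :=
    f.range_pow_le_range_pow hp ⟨v, rfl⟩
  have key := aeval_restrict_apply f (f.apply_mem_range_pow_of_mem _) (X ^ (c + 1) * g) ⟨_, hv⟩
  rw [hg] at key
  rw [hcomm, mul_apply]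
  exact key

end Module.End

theorem pow_eq_pow_mul_lin_comb_general {N : ℕ} (A : Matrix (Fin N) (Fin N) ℝ)
    (p q : ℕ) (hp : N ≤ p) (hpq : p ≤ q) :
    ∃ α : Fin (A ^ N).rank → ℝ,
      A ^ p = A ^ q * ∑ i : Fin (A ^ N).rank, α i • A ^ ((i : ℕ) + 1) := by
  let φ := Matrix.toLinAlgEquiv' (R := ℝ) (n := Fin N)
  obtain ⟨g, hdeg, hf⟩ := Module.End.exists_pow_eq_pow_mul_aeval (φ A) (by simpa using hp) hpq
  have hrank : finrank ℝ (LinearMap.range (φ A ^ finrank ℝ (Fin N → ℝ))) = (A ^ N).rank := by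
    rw [finrank_fin_fun, ← map_pow, Matrix.rank, ← Matrix.toLin'_apply']
    rfl
  rw [hrank] at hdeg
  have hA : A ^ p = A ^ q * (A * aeval A g) :=
    φ.injective (by simpa only [map_mul, map_pow, aeval_algHom_apply] using hf)
  refine ⟨fun i => g.coeff i, ?_⟩
  rw [hA, aeval_eq_sum_range_of_degree_lt hdeg, Finset.mul_sum, ← Fin.sum_univ_eq_sum_range]
  simp only [mul_smul_comm, ← pow_succ']

/-- For a nonzero `N×N` real matrix `A` with `R = rank(A^N)` and integers `N ≤ p ≤ q`,
there exist reals `α_1, …, α_R` with `A^p = A^q · Σ_{i=1}^R α_i A^i`. -/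
theorem pow_eq_pow_mul_lin_comb {N : ℕ} (A : Matrix (Fin N) (Fin N) ℝ)
    (hA : A ≠ 0) (p q : ℕ) (hp : N ≤ p) (hpq : p ≤ q) :
    ∃ α : Fin (A ^ N).rank → ℝ,
      A ^ p = A ^ q * ∑ i : Fin (A ^ N).rank, α i • A ^ ((i : ℕ) + 1) :=
  pow_eq_pow_mul_lin_comb_general A p q hp hpq
end

section
/- Kalman rank test for output controllability: the discrete-time linear system x_k = A x_{k−1} + B u_k, y_k = C x_k is output controllable (i.e., for every initial state x_0 and every target y_f ∈ ℝ^n there exist a finite K and inputs u_1,…,u_K driving y_K = y_f) if and only if rank(C·W) = n, where W = [A^{N−1}B, …, B]. -/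
open Matrix

/-- The controllability matrix `W = [A^{N−1}B, …, B]` of the pair `(A, B)`. -/
def ctrbMat {N m : ℕ} (A : Matrix (Fin N) (Fin N) ℝ) (B : Matrix (Fin N) (Fin m) ℝ) :
    Matrix (Fin N) (Fin N × Fin m) ℝ :=
  fun i p => (A ^ (N - 1 - (p.1 : ℕ)) * B) i p.2

/-- Output controllability of the system `x_k = A x_{k−1} + B u_k`, `y_k = C x_k`:
every target output is reachable from every initial state in finite time. -/
def OutputControllable {N m n : ℕ} (A : Matrix (Fin N) (Fin N) ℝ)
    (B : Matrix (Fin N) (Fin m) ℝ) (C : Matrix (Fin n) (Fin N) ℝ) : Prop :=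
  ∀ x0 : Fin N → ℝ, ∀ yf : Fin n → ℝ, ∃ K : ℕ, 0 < K ∧ ∃ u : Fin K → Fin m → ℝ,
    C.mulVec ((∑ k : Fin K, (A ^ (K - 1 - (k : ℕ))).mulVec (B.mulVec (u k)))
      + (A ^ K).mulVec x0) = yf


/-!
A state reachable from `x₀ = 0` is a sum of vectors `A^j B w`. For `j < N` these are images of
column blocks of `W`, and by Cayley–Hamilton every `A^j` is a combination of `A^0, …, A^(N-1)`,
so the states reachable from `0` (at any horizon) form exactly the column space of `W`. The free
response `C A^K x₀` is a fixed vector that the inputs can compensate, hence output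
controllability is surjectivity of `C W`, i.e. `rank (C W) = n`.
-/

open Polynomial

theorem Matrix.pow_mem_span_pow_lt_card {n R : Type*} [Fintype n] [DecidableEq n] [CommRing R]
    [Nontrivial R] (A : Matrix n n R) (j : ℕ) :
    A ^ j ∈ Submodule.span R ((A ^ ·) '' Set.Iio (Fintype.card n)) := by
  classical
  have hdeg : X ^ j %ₘ A.charpoly ∈ degreeLT R (Fintype.card n) := by
    rw [mem_degreeLT, ← A.charpoly_natDegree_eq_dim,
      ← degree_eq_natDegree A.charpoly_monic.ne_zero]
    exact degree_modByMonic_lt _ A.charpoly_monic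
  rw [degreeLT_eq_span_X_pow] at hdeg
  have hmap := Submodule.mem_map_of_mem (f := (aeval A).toLinearMap) hdeg
  rw [Submodule.map_span, Finset.coe_image, ← Set.image_comp, Finset.coe_range] at hmap
  rw [A.pow_eq_aeval_mod_charpoly]
  simpa [Function.comp_def] using hmap

theorem Matrix.rank_eq_card_height_iff_range_eq_top {m n K : Type*} [Fintype m] [Fintype n]
    [Field K] (M : Matrix m n K) :
    M.rank = Fintype.card m ↔ LinearMap.range M.mulVecLin = ⊤ := by
  rw [Matrix.rank, ← Module.finrank_fintype_fun_eq_card K]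
  exact ⟨Submodule.eq_top_of_finrank_eq, fun h => by rw [h, finrank_top]⟩

section

variable {N m : ℕ} (A : Matrix (Fin N) (Fin N) ℝ) (B : Matrix (Fin N) (Fin m) ℝ)

/-- The state `x_K` reached from `x_0 = 0`; the input `u_k` of the paper is `u (k - 1)`. -/
def forcedResponse {K : ℕ} (u : Fin K → Fin m → ℝ) : Fin N → ℝ :=
  ∑ k : Fin K, A ^ (K - 1 - (k : ℕ)) *ᵥ B *ᵥ u k

theorem forcedResponse_cons_zero {K : ℕ} (u : Fin K → Fin m → ℝ) :
    forcedResponse A B (Fin.cons 0 u : Fin (K + 1) → Fin m → ℝ) = forcedResponse A B u := by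
  simp [forcedResponse, Fin.sum_univ_succ, Nat.sub_sub, add_comm]

theorem ctrbMat_mulVec_uncurry (u : Fin N → Fin m → ℝ) :
    ctrbMat A B *ᵥ Function.uncurry u = forcedResponse A B u := by
  ext i
  simp [forcedResponse, ctrbMat, mulVec, dotProduct, Fintype.sum_prod_type, Finset.sum_apply]

theorem pow_mulVec_mem_range_ctrbMat_of_lt {i : ℕ} (hi : i < N) (w : Fin m → ℝ) :
    A ^ i *ᵥ B *ᵥ w ∈ LinearMap.range (ctrbMat A B).mulVecLin := by
  refine ⟨Function.uncurry (Pi.single (Fin.rev ⟨i, hi⟩) w), ?_⟩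
  rw [mulVecLin_apply, ctrbMat_mulVec_uncurry, forcedResponse,
    Fintype.sum_eq_single (Fin.rev ⟨i, hi⟩) fun k hk => by simp [Pi.single_eq_of_ne hk],
    Fin.val_rev, show N - 1 - (N - (i + 1)) = i by omega]
  simp

theorem pow_mulVec_mem_range_ctrbMat (j : ℕ) (w : Fin m → ℝ) :
    A ^ j *ᵥ B *ᵥ w ∈ LinearMap.range (ctrbMat A B).mulVecLin := by
  have hspan := A.pow_mem_span_pow_lt_card j
  rw [Fintype.card_fin] at hspan
  generalize A ^ j = M at hspan ⊢
  induction hspan using Submodule.span_induction with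
  | mem M hM =>
    obtain ⟨i, hi, rfl⟩ := hM
    exact pow_mulVec_mem_range_ctrbMat_of_lt A B hi w
  | zero => simp
  | add M M' _ _ hM hM' => rw [add_mulVec]; exact add_mem hM hM'
  | smul c M _ hM => rw [smul_mulVec]; exact Submodule.smul_mem _ c hM

theorem forcedResponse_mem_range_ctrbMat {K : ℕ} (u : Fin K → Fin m → ℝ) :
    forcedResponse A B u ∈ LinearMap.range (ctrbMat A B).mulVecLin :=
  Submodule.sum_mem _ fun k _ => pow_mulVec_mem_range_ctrbMat A B _ (u k)

end

/-- Kalman rank test for output controllability: the system is output controllable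
iff `rank(C·W) = n`. -/
theorem output_controllable_iff_rank {N m n : ℕ} (A : Matrix (Fin N) (Fin N) ℝ)
    (B : Matrix (Fin N) (Fin m) ℝ) (C : Matrix (Fin n) (Fin N) ℝ) :
    OutputControllable A B C ↔ (C * ctrbMat A B).rank = n := by
  have hrank := (C * ctrbMat A B).rank_eq_card_height_iff_range_eq_top
  rw [Fintype.card_fin] at hrank
  rw [hrank, mulVecLin_mul, LinearMap.range_comp, Submodule.eq_top_iff']
  constructor
  · intro h y
    obtain ⟨K, -, u, hu⟩ := h 0 y
    rw [mulVec_zero, add_zero] at hu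
    exact ⟨_, forcedResponse_mem_range_ctrbMat A B u, hu⟩
  · intro h x₀ y
    obtain ⟨_, ⟨v, rfl⟩, hv⟩ := h (y - C *ᵥ A ^ (N + 1) *ᵥ x₀)
    -- horizon `N + 1` rather than `N`, so that `0 < K` also when `N = 0`
    refine ⟨N + 1, N.succ_pos, Fin.cons 0 (Function.curry v), ?_⟩
    change C *ᵥ (forcedResponse A B _ + _) = y
    rw [forcedResponse_cons_zero, ← ctrbMat_mulVec_uncurry, Function.uncurry_curry, mulVec_add]
    simp only [mulVecLin_apply] at hv
    rw [hv, sub_add_cancel]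
end

section
/- Necessity of the sparsity bound: if the system (A,B,C) is output s-sparse controllable, then rank(C·W) = n and for every 0 ≤ i ≤ N−1, (i+1)·s ≥ Σ_{j=0}^{i} R_j = n − rank(C·A^{i+1}·W), where R_j = rank(C A^j W) − rank(C A^{j+1} W). -/
/-!
An output reachable from the origin is a sum `∑ₑ C Aᵉ B wₑ` of `s`-sparse inputs. By
Cayley–Hamilton the range of every `Aᵗ B` lies in the range of `W`, which is therefore
`A`-invariant; so the terms with `e ≥ j` lie in `range (C Aʲ W)`, whose dimension is antitone
in `j` (this gives the telescoping), while the terms with `e < j` are combinations of at most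
`j s` columns of the matrices `C Aᵉ B`. Hence `ℝⁿ` is a finite union of the subspaces
`range (C Aʲ W) + span (j s such columns)`; a vector space over an infinite field is not a finite
union of proper subspaces, so `n ≤ rank (C Aʲ W) + j s`. For `j = 0` this is `rank (C W) = n`.
-/

open Matrix

/-- Output `s`-sparse controllability: every target output is reachable from every
initial state in finite time using inputs each with at most `s` nonzero entries. -/
def OutputSparseControllable {N m n : ℕ} (A : Matrix (Fin N) (Fin N) ℝ)
    (B : Matrix (Fin N) (Fin m) ℝ) (C : Matrix (Fin n) (Fin N) ℝ) (s : ℕ) : Prop :=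
  ∀ x0 : Fin N → ℝ, ∀ yf : Fin n → ℝ, ∃ K : ℕ, 0 < K ∧ ∃ u : Fin K → Fin m → ℝ,
    (∀ k, (Function.support (u k)).ncard ≤ s) ∧
    C.mulVec ((∑ k : Fin K, (A ^ (K - 1 - (k : ℕ))).mulVec (B.mulVec (u k)))
      + (A ^ K).mulVec x0) = yf

theorem Finset.sum_range_tsub_of_antitone {f : ℕ → ℕ} (hf : Antitone f) (n : ℕ) :
    ∑ i ∈ Finset.range n, (f i - f (i + 1)) = f 0 - f n := by
  induction n with
  | zero => simp
  | succ n ih =>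
    have h₀ := hf (Nat.zero_le n)
    have h₁ := hf (Nat.le_add_right n 1)
    rw [Finset.sum_range_succ, ih]
    omega

theorem Matrix.exists_pow_eq_sum_range_card {ι R : Type*} [Fintype ι] [DecidableEq ι]
    [CommRing R] [Nontrivial R] (A : Matrix ι ι R) (t : ℕ) :
    ∃ c : ℕ → R, A ^ t = ∑ j ∈ Finset.range (Fintype.card ι), c j • A ^ j := by
  rcases (Fintype.card ι).eq_zero_or_pos with h | h
  · have : IsEmpty ι := Fintype.card_eq_zero_iff.mp h
    exact ⟨0, Subsingleton.elim _ _⟩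
  · have hdeg := A.charpoly_natDegree_eq_dim
    have hne : A.charpoly ≠ 1 := fun h1 => by
      rw [h1, Polynomial.natDegree_one] at hdeg
      omega
    refine ⟨(Polynomial.X ^ t %ₘ A.charpoly).coeff, ?_⟩
    rw [A.pow_eq_aeval_mod_charpoly, Polynomial.aeval_eq_sum_range'
      (hdeg ▸ Polynomial.natDegree_modByMonic_lt _ A.charpoly_monic hne)]

theorem Submodule.finrank_le_finrank_add_of_forall_mem_sup_span {K V ι : Type*} [Field K]
    [Infinite K] [AddCommGroup V] [Module K V] [FiniteDimensional K V] [Finite ι]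
    (U : Submodule K V) (v : ι → V) (d : ℕ)
    (h : ∀ y : V, ∃ t : Finset ι, t.card ≤ d ∧ y ∈ U ⊔ Submodule.span K (v '' t)) :
    Module.finrank K V ≤ Module.finrank K U + d := by
  obtain ⟨⟨t, htd⟩, htop⟩ := Subspace.exists_eq_top_of_iUnion_eq_univ
    (p := fun t : {t : Finset ι // t.card ≤ d} => U ⊔ Submodule.span K (v '' t))
    (Set.iUnion_eq_univ_iff.2 fun y => by
      obtain ⟨t, htd, hy⟩ := h y
      exact ⟨⟨t, htd⟩, hy⟩)
  calc Module.finrank K V = Module.finrank K ↥(U ⊔ Submodule.span K (v '' t)) := by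
        rw [htop, finrank_top]
    _ ≤ Module.finrank K U + Module.finrank K (Submodule.span K (v '' t)) :=
        Submodule.finrank_add_le_finrank_add_finrank _ _
    _ ≤ Module.finrank K U + d := by
        gcongr
        classical
        rw [← Finset.coe_image]
        exact (finrank_span_finset_le_card _).trans (Finset.card_image_le.trans htd)

section Controllability

variable {N m n : ℕ} (A : Matrix (Fin N) (Fin N) ℝ) (B : Matrix (Fin N) (Fin m) ℝ)

theorem ctrbMat_mulVec (x : Fin N × Fin m → ℝ) :
    ctrbMat A B *ᵥ x = ∑ p : Fin N, (A ^ (N - 1 - (p : ℕ)) * B) *ᵥ fun q => x (p, q) := by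
  ext i
  simp [mulVec, dotProduct, Fintype.sum_prod_type, ctrbMat]

theorem range_pow_mul_le_range_ctrbMat_of_lt {t : ℕ} (ht : t < N) :
    LinearMap.range (A ^ t * B).mulVecLin ≤ LinearMap.range (ctrbMat A B).mulVecLin := by
  rw [range_mulVecLin, range_mulVecLin]
  refine Submodule.span_mono ?_
  rintro _ ⟨q, rfl⟩
  refine ⟨(⟨N - 1 - t, by omega⟩, q), ?_⟩
  ext i
  simp [ctrbMat, show N - 1 - (N - 1 - t) = t by omega]

theorem range_pow_mul_le_range_ctrbMat (t : ℕ) :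
    LinearMap.range (A ^ t * B).mulVecLin ≤ LinearMap.range (ctrbMat A B).mulVecLin := by
  obtain ⟨c, hc⟩ := A.exists_pow_eq_sum_range_card t
  rintro _ ⟨u, rfl⟩
  rw [Fintype.card_fin] at hc
  simp only [mulVecLin_apply, hc, Matrix.sum_mul, Matrix.sum_mulVec, Matrix.smul_mul,
    Matrix.smul_mulVec]
  refine Submodule.sum_mem _ fun j hj => Submodule.smul_mem _ _ ?_
  exact range_pow_mul_le_range_ctrbMat_of_lt A B (Finset.mem_range.mp hj) ⟨u, rfl⟩

theorem range_mul_ctrbMat_le :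
    LinearMap.range (A * ctrbMat A B).mulVecLin ≤ LinearMap.range (ctrbMat A B).mulVecLin := by
  rintro _ ⟨x, rfl⟩
  rw [mulVecLin_apply, ← mulVec_mulVec, ctrbMat_mulVec, mulVec_sum]
  refine Submodule.sum_mem _ fun p _ => ?_
  rw [mulVec_mulVec, ← Matrix.mul_assoc, ← pow_succ']
  exact range_pow_mul_le_range_ctrbMat A B _ ⟨_, rfl⟩

variable (C : Matrix (Fin n) (Fin N) ℝ)

theorem range_mul_pow_succ_mul_ctrbMat_le (j : ℕ) :
    LinearMap.range (C * A ^ (j + 1) * ctrbMat A B).mulVecLin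
      ≤ LinearMap.range (C * A ^ j * ctrbMat A B).mulVecLin := by
  rw [show C * A ^ (j + 1) * ctrbMat A B = C * A ^ j * (A * ctrbMat A B) by
      simp only [pow_succ, Matrix.mul_assoc],
    mulVecLin_mul, LinearMap.range_comp, mulVecLin_mul (C * A ^ j), LinearMap.range_comp]
  exact Submodule.map_mono (range_mul_ctrbMat_le A B)

theorem antitone_rank_mul_pow_mul_ctrbMat :
    Antitone fun j => (C * A ^ j * ctrbMat A B).rank :=
  antitone_nat_of_succ_le fun j =>
    Submodule.finrank_mono (range_mul_pow_succ_mul_ctrbMat_le A B C j)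

theorem mul_pow_add_mul_mulVec_mem_range (j t : ℕ) (u : Fin m → ℝ) :
    (C * A ^ (j + t) * B) *ᵥ u ∈ LinearMap.range (C * A ^ j * ctrbMat A B).mulVecLin := by
  obtain ⟨x, hx⟩ := range_pow_mul_le_range_ctrbMat A B t ⟨u, rfl⟩
  refine ⟨x, ?_⟩
  simp only [mulVecLin_apply] at hx ⊢
  rw [← mulVec_mulVec, hx, mulVec_mulVec]
  simp only [pow_add, Matrix.mul_assoc]

end Controllability

namespace OutputSparseControllable

variable {N m n s : ℕ} {A : Matrix (Fin N) (Fin N) ℝ} {B : Matrix (Fin N) (Fin m) ℝ}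
  {C : Matrix (Fin n) (Fin N) ℝ}

-- `w e` is the input applied `e` steps before the final time.
theorem exists_sparse_sum (h : OutputSparseControllable A B C s) (y : Fin n → ℝ) :
    ∃ K : ℕ, ∃ w : ℕ → Fin m → ℝ, (∀ e, (Function.support (w e)).ncard ≤ s) ∧
      y = ∑ e ∈ Finset.range K, (C * A ^ e * B) *ᵥ w e := by
  obtain ⟨K, -, u, hu, hy⟩ := h 0 y
  refine ⟨K, fun e => if he : e < K then u (Fin.rev ⟨e, he⟩) else 0, fun e => ?_, ?_⟩
  · dsimp only
    split_ifs
    · exact hu _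
    · simp
  · rw [← hy, mulVec_zero, add_zero, mulVec_sum,
      ← Fin.sum_univ_eq_sum_range (fun e => (C * A ^ e * B) *ᵥ _)]
    refine Fintype.sum_equiv Fin.revPerm _ _ fun k => ?_
    simp only [Fin.revPerm_apply, Fin.is_lt, ↓reduceDIte, Fin.eta, Fin.rev_rev]
    simp only [Fin.val_rev, mulVec_mulVec, Matrix.mul_assoc]
    rw [Nat.sub_sub, Nat.add_comm]

theorem le_rank_add_mul (h : OutputSparseControllable A B C s) (j : ℕ) :
    n ≤ (C * A ^ j * ctrbMat A B).rank + j * s := by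
  classical
  have := Submodule.finrank_le_finrank_add_of_forall_mem_sup_span
    (LinearMap.range (C * A ^ j * ctrbMat A B).mulVecLin)
    (fun p : Fin j × Fin m => (C * A ^ (p.1 : ℕ) * B)ᵀ p.2) (j * s) fun y => ?_
  · simpa [Matrix.rank] using this
  obtain ⟨K, w, hw, rfl⟩ := h.exists_sparse_sum y
  refine ⟨Finset.univ.filter fun p => w p.1 p.2 ≠ 0, ?_, Submodule.sum_mem _ fun e _ => ?_⟩
  · calc (Finset.univ.filter fun p : Fin j × Fin m => w p.1 p.2 ≠ 0).card
        = ∑ e : Fin j, (Function.support (w e)).ncard := by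
          simp only [Finset.card_filter, Fintype.sum_prod_type, Set.ncard_eq_toFinset_card',
            Function.support, Set.toFinset_ofPred]
      _ ≤ ∑ _e : Fin j, s := Finset.sum_le_sum fun e _ => hw e
      _ = j * s := by simp
  rcases lt_or_ge e j with hej | hje
  · refine Submodule.mem_sup_right ?_
    rw [mulVec_eq_sum]
    simp only [op_smul_eq_smul]
    refine Submodule.sum_mem _ fun q _ => ?_
    by_cases hq : w e q = 0
    · simp [hq]
    · refine Submodule.smul_mem _ _ (Submodule.subset_span ?_)
      exact ⟨(⟨e, hej⟩, q), by simpa using hq, rfl⟩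
  · obtain ⟨t, rfl⟩ := Nat.exists_eq_add_of_le hje
    exact Submodule.mem_sup_left (mul_pow_add_mul_mulVec_mem_range A B C j t (w (j + t)))

end OutputSparseControllable

theorem output_sparse_controllable_necessary_general {N m n : ℕ}
    (A : Matrix (Fin N) (Fin N) ℝ) (B : Matrix (Fin N) (Fin m) ℝ)
    (C : Matrix (Fin n) (Fin N) ℝ) (s : ℕ)
    (h : OutputSparseControllable A B C s) :
    (C * ctrbMat A B).rank = n ∧
      ∀ i < N,
        (∑ j ∈ Finset.range (i + 1),
            ((C * A ^ j * ctrbMat A B).rank - (C * A ^ (j + 1) * ctrbMat A B).rank))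
          = n - (C * A ^ (i + 1) * ctrbMat A B).rank ∧
        n - (C * A ^ (i + 1) * ctrbMat A B).rank ≤ (i + 1) * s := by
  have hrank : (C * ctrbMat A B).rank = n := by
    have := h.le_rank_add_mul 0
    simp only [pow_zero, Matrix.mul_one, zero_mul, add_zero] at this
    exact le_antisymm ((C * ctrbMat A B).rank_le_card_height.trans_eq (Fintype.card_fin n)) this
  refine ⟨hrank, fun i _ => ⟨?_, ?_⟩⟩
  · rw [Finset.sum_range_tsub_of_antitone (antitone_rank_mul_pow_mul_ctrbMat A B C),
      pow_zero, Matrix.mul_one, hrank]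
  · have := h.le_rank_add_mul (i + 1)
    omega

/-- Necessity: if the system is output `s`-sparse controllable, then `rank(C·W) = n`
and for every `0 ≤ i ≤ N−1`, `(i+1)·s ≥ Σ_{j=0}^i R_j = n − rank(C·A^{i+1}·W)`. -/
theorem output_sparse_controllable_necessary {N m n : ℕ}
    (A : Matrix (Fin N) (Fin N) ℝ) (B : Matrix (Fin N) (Fin m) ℝ)
    (C : Matrix (Fin n) (Fin N) ℝ) (s : ℕ) (hs : 0 < s) (hsm : s ≤ m)
    (h : OutputSparseControllable A B C s) :
    (C * ctrbMat A B).rank = n ∧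
      ∀ i < N,
        (∑ j ∈ Finset.range (i + 1),
            ((C * A ^ j * ctrbMat A B).rank - (C * A ^ (j + 1) * ctrbMat A B).rank))
          = n - (C * A ^ (i + 1) * ctrbMat A B).rank ∧
        n - (C * A ^ (i + 1) * ctrbMat A B).rank ≤ (i + 1) * s :=
  output_sparse_controllable_necessary_general A B C s h
end

section
/- If rank(C·W) = n and s ≥ min{m, N − rank(A)}, then the system (A,B,C) is output s-sparse controllable. In particular, if A is invertible, output controllability implies output s-sparse controllability for every s ≥ 1. -/
open Matrix

/-!
Let `𝒦 = ⟨A | im B⟩` be the reachable subspace. Since `rank (C W) = n`, `C` maps `𝒦` onto the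
output space, so it suffices to find a schedule of input supports, each of size at most `s`,
whose states reachable from `0` contain `𝒦`.

As `𝒦 = A 𝒦 + span (columns of B)` and `dim (𝒦 / A 𝒦) ≤ dim ker A = N - rank A`, some set `S` of
at most `min m (N - rank A)` columns already gives `𝒦 = A 𝒦 + span B_S`, and unrolling,
`𝒦 = A^c 𝒦 + ∑_{i<c} A^i span B_S`. For `c` beyond the point where `A^c 𝒦` stabilises,
`A^c 𝒦 = A^c (A^{mN} 𝒦)`, and `A^{mN} 𝒦` is reached in `mN` steps that feed the columns of `B`
one at a time, `N` steps each (Cayley–Hamilton). So: `mN` single-column steps, then `c` steps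
with inputs supported on `S`.
-/

open Submodule Module Set

namespace Submodule

variable {R M : Type*} [Ring R] [AddCommGroup M] [Module R M] {f : Module.End R M}
  {X : Submodule R M}

theorem map_pow_le_of_map_le (hX : X.map f ≤ X) (c : ℕ) : X.map (f ^ c) ≤ X := by
  induction c with
  | zero => rw [pow_zero, Module.End.one_eq_id, map_id]
  | succ c ih =>
    rw [pow_succ, Module.End.mul_eq_comp, map_comp]
    exact (map_mono hX).trans ih

theorem map_pow_antitone (hX : X.map f ≤ X) : Antitone fun c : ℕ => X.map (f ^ c) := by
  intro a b hab
  obtain ⟨t, rfl⟩ := Nat.exists_eq_add_of_le hab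
  dsimp only
  rw [pow_add, Module.End.mul_eq_comp, map_comp]
  exact map_mono (map_pow_le_of_map_le hX t)

theorem exists_map_pow_eq [IsArtinian R M] (hX : X.map f ≤ X) :
    ∃ c₀, ∀ c, c₀ ≤ c → X.map (f ^ c) = X.map (f ^ c₀) := by
  obtain ⟨c₀, h⟩ := IsArtinian.monotone_stabilizes
    ⟨fun c => OrderDual.toDual (X.map (f ^ c)), map_pow_antitone hX⟩
  exact ⟨c₀, fun c hc => (h c hc).symm⟩

theorem le_map_pow_sup_iSup_of_le_map_sup {Y : Submodule R M} (h : X ≤ X.map f ⊔ Y) (c : ℕ) :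
    X ≤ X.map (f ^ c) ⊔ ⨆ i < c, Y.map (f ^ i) := by
  induction c with
  | zero => rw [pow_zero, Module.End.one_eq_id, map_id]; exact le_sup_left
  | succ c ih =>
    have step : X.map (f ^ c) ≤ X.map (f ^ (c + 1)) ⊔ Y.map (f ^ c) := by
      rw [pow_succ, Module.End.mul_eq_comp, map_comp, ← map_sup]
      exact map_mono h
    rw [Nat.iSup_lt_succ]
    refine ih.trans (sup_le (step.trans ?_) ?_)
    · exact sup_le le_sup_left (le_sup_of_le_right le_sup_right)
    · exact le_sup_of_le_right le_sup_left

variable {𝕜 V : Type*} [Field 𝕜] [AddCommGroup V] [Module 𝕜 V]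

theorem finrank_map_mkQ_add_finrank [FiniteDimensional 𝕜 V] {U X : Submodule 𝕜 V} (h : U ≤ X) :
    finrank 𝕜 (X.map U.mkQ) + finrank 𝕜 U = finrank 𝕜 X := by
  have := LinearMap.finrank_range_add_finrank_ker (U.mkQ.domRestrict X)
  rwa [LinearMap.range_domRestrict, LinearMap.ker_domRestrict, ker_mkQ,
    (comapSubtypeEquivOfLe h).finrank_eq] at this

theorem finrank_le_finrank_map_add_finrank_ker [FiniteDimensional 𝕜 V] {W : Type*}
    [AddCommGroup W] [Module 𝕜 W] (f : V →ₗ[𝕜] W) (X : Submodule 𝕜 V) :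
    finrank 𝕜 X ≤ finrank 𝕜 (X.map f) + finrank 𝕜 (LinearMap.ker f) := by
  have := LinearMap.finrank_range_add_finrank_ker (f.domRestrict X)
  rw [LinearMap.range_domRestrict, LinearMap.ker_domRestrict, ← finrank_map_subtype_eq] at this
  have := finrank_mono (map_comap_le X.subtype (LinearMap.ker f))
  omega

theorem exists_finset_card_le_and_span_range_le_sup {ι : Type*} [Fintype ι]
    (U : Submodule 𝕜 V) (v : ι → V) :
    ∃ S : Finset ι, S.card ≤ finrank 𝕜 ((span 𝕜 (range v)).map U.mkQ) ∧
      span 𝕜 (range v) ≤ U ⊔ span 𝕜 (v '' S) := by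
  classical
  have := FiniteDimensional.span_of_finite 𝕜 (finite_range v)
  obtain ⟨b, -, -, hspan, hli⟩ :=
    exists_linearIndepOn_extension (v := U.mkQ ∘ v) (linearIndepOn_empty 𝕜 _) (empty_subset univ)
  rw [image_univ] at hspan
  have hmap : span 𝕜 ((U.mkQ ∘ v) '' b) = (span 𝕜 (v '' b)).map U.mkQ := by
    rw [map_span, image_comp]
  refine ⟨b.toFinset, ?_, ?_⟩
  · calc b.toFinset.card = finrank 𝕜 (span 𝕜 ((U.mkQ ∘ v) '' b)) := by
          rw [image_eq_range, finrank_span_eq_card hli, toFinset_card]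
      _ ≤ _ := by
          rw [hmap]
          exact finrank_mono (map_mono (span_mono (image_subset_range v b)))
  · rw [← comap_map_mkQ, coe_toFinset, ← hmap, span_le]
    rintro _ ⟨j, rfl⟩
    exact hspan ⟨j, rfl⟩

end Submodule

namespace Module.End

variable {𝕜 V : Type*} [Field 𝕜] [AddCommGroup V] [Module 𝕜 V] (f : Module.End 𝕜 V)

def krylov (v : V) : Submodule 𝕜 V := span 𝕜 (range fun i : ℕ => (f ^ i) v)

theorem pow_apply_mem_krylov (v : V) (i : ℕ) : (f ^ i) v ∈ f.krylov v := subset_span ⟨i, rfl⟩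

theorem map_krylov_le (v : V) : (f.krylov v).map f ≤ f.krylov v := by
  rw [krylov, map_span, span_le]
  rintro _ ⟨_, ⟨i, rfl⟩, rfl⟩
  rw [← Module.End.mul_apply, ← pow_succ']
  exact f.pow_apply_mem_krylov v (i + 1)

theorem krylov_le_map_sup_span (v : V) : f.krylov v ≤ (f.krylov v).map f ⊔ span 𝕜 {v} := by
  rw [krylov, span_le]
  rintro _ ⟨_ | i, rfl⟩
  · exact mem_sup_right (mem_span_singleton_self v)
  · refine mem_sup_left ⟨(f ^ i) v, f.pow_apply_mem_krylov v i, ?_⟩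
    rw [← Module.End.mul_apply, ← pow_succ']

open Polynomial in
theorem krylov_eq_span_pow_lt [FiniteDimensional 𝕜 V] (v : V) :
    f.krylov v = span 𝕜 (range fun i : Fin (finrank 𝕜 V) => (f ^ (i : ℕ)) v) := by
  refine le_antisymm (span_le.2 ?_) (span_mono (range_subset_iff.2 fun i => ⟨i, rfl⟩))
  rintro _ ⟨k, rfl⟩
  rcases (finrank 𝕜 V).eq_zero_or_pos with h0 | hpos
  · have : Subsingleton V := finrank_zero_iff.1 h0
    simp [Subsingleton.elim ((f ^ k) v) 0]
  have hdeg : (X ^ k %ₘ f.charpoly).natDegree < finrank 𝕜 V := by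
    rw [← f.charpoly_natDegree]
    exact natDegree_modByMonic_lt _ f.charpoly_monic
      (ne_of_apply_ne natDegree (by rw [f.charpoly_natDegree, natDegree_one]; omega))
  dsimp only
  rw [f.pow_eq_aeval_mod_charpoly, aeval_eq_sum_range' hdeg, LinearMap.sum_apply]
  refine sum_mem fun i hi => ?_
  rw [LinearMap.smul_apply]
  exact smul_mem _ _ (subset_span ⟨⟨i, Finset.mem_range.1 hi⟩, rfl⟩)

end Module.End

namespace LinearControl

variable {𝕜 V : Type*} [Field 𝕜] [AddCommGroup V] [Module 𝕜 V] {m : ℕ}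
  (f : Module.End 𝕜 V) (g : (Fin m → 𝕜) →ₗ[𝕜] V)

def supportMask (S : Finset (Fin m)) : (Fin m → 𝕜) →ₗ[𝕜] Fin m → 𝕜 :=
  LinearMap.pi fun j => if j ∈ S then LinearMap.proj j else 0

theorem supportMask_apply (S : Finset (Fin m)) (u : Fin m → 𝕜) (j : Fin m) :
    supportMask S u j = if j ∈ S then u j else 0 := by
  by_cases hj : j ∈ S <;> simp [supportMask, hj]

theorem support_supportMask_subset (S : Finset (Fin m)) (u : Fin m → 𝕜) :
    Function.support (supportMask S u) ⊆ S := fun j hj => by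
  by_contra h
  exact hj (by rw [supportMask_apply, if_neg (Finset.mem_coe.not.1 h)])

theorem supportMask_single_one {S : Finset (Fin m)} {j : Fin m} (hj : j ∈ S) :
    supportMask S (Pi.single j (1 : 𝕜)) = Pi.single j 1 := by
  ext i
  by_cases hi : i = j
  · subst hi; simp [supportMask_apply, hj]
  · simp [supportMask_apply, hi]

/-- The state reached from `0` after `K` steps of `x ↦ f x + g u`, when the input at step `k`
is restricted to the channels `σ k`. -/
def scheduleMap {K : ℕ} (σ : Fin K → Finset (Fin m)) : (Fin K → Fin m → 𝕜) →ₗ[𝕜] V :=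
  ∑ k : Fin K, (f ^ (K - 1 - k)) ∘ₗ g ∘ₗ supportMask (σ k) ∘ₗ LinearMap.proj k

variable {f g}

theorem scheduleMap_apply {K : ℕ} (σ : Fin K → Finset (Fin m)) (u : Fin K → Fin m → 𝕜) :
    scheduleMap f g σ u = ∑ k : Fin K, (f ^ (K - 1 - k)) (g (supportMask (σ k) (u k))) := by
  simp [scheduleMap]

theorem scheduleMap_append {K₁ K₂ : ℕ} (τ : Fin K₁ → Finset (Fin m)) (ρ : Fin K₂ → Finset (Fin m))
    (u : Fin K₁ → Fin m → 𝕜) (w : Fin K₂ → Fin m → 𝕜) :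
    scheduleMap f g (Fin.append τ ρ) (Fin.append u w) =
      (f ^ K₂) (scheduleMap f g τ u) + scheduleMap f g ρ w := by
  simp only [scheduleMap_apply, Fin.sum_univ_add, Fin.append_left, Fin.append_right, map_sum,
    ← Module.End.mul_apply, ← pow_add, Fin.val_castAdd, Fin.val_natAdd]
  congr 1 <;> refine Finset.sum_congr rfl fun k _ => ?_ <;> congr 2 <;>
    omega

theorem map_sup_range_le_range_scheduleMap_append {K₁ K₂ : ℕ} (τ : Fin K₁ → Finset (Fin m))
    (ρ : Fin K₂ → Finset (Fin m)) :
    (LinearMap.range (scheduleMap f g τ)).map (f ^ K₂) ⊔ LinearMap.range (scheduleMap f g ρ) ≤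
      LinearMap.range (scheduleMap f g (Fin.append τ ρ)) := by
  intro x hx
  obtain ⟨_, ⟨_, ⟨u, rfl⟩, rfl⟩, _, ⟨w, rfl⟩, rfl⟩ := mem_sup.1 hx
  exact ⟨Fin.append u w, scheduleMap_append τ ρ u w⟩

theorem pow_apply_mem_range_scheduleMap {K : ℕ} {σ : Fin K → Finset (Fin m)} {k : Fin K}
    {j : Fin m} (hj : j ∈ σ k) :
    (f ^ (K - 1 - k)) (g (Pi.single j 1)) ∈ LinearMap.range (scheduleMap f g σ) := by
  refine ⟨Pi.single k (Pi.single j 1), ?_⟩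
  rw [scheduleMap_apply, Finset.sum_eq_single k, Pi.single_eq_same, supportMask_single_one hj]
  · intro k' _ hk'
    rw [Pi.single_eq_of_ne hk', map_zero, map_zero, map_zero]
  · exact fun h => absurd (Finset.mem_univ k) h

variable (f g)

def reachableSubspace : Submodule 𝕜 V := ⨆ j, f.krylov (g (Pi.single j 1))

theorem map_reachableSubspace_le : (reachableSubspace f g).map f ≤ reachableSubspace f g := by
  rw [reachableSubspace, Submodule.map_iSup]
  exact iSup_mono fun j => f.map_krylov_le _

theorem pow_apply_single_mem_reachableSubspace (i : ℕ) (j : Fin m) :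
    (f ^ i) (g (Pi.single j 1)) ∈ reachableSubspace f g :=
  mem_iSup_of_mem j (f.pow_apply_mem_krylov _ i)

theorem reachableSubspace_le_map_sup_span :
    reachableSubspace f g ≤
      (reachableSubspace f g).map f ⊔ span 𝕜 (range fun j => g (Pi.single j 1)) :=
  iSup_le fun j => (f.krylov_le_map_sup_span _).trans <|
    sup_le_sup (map_mono (le_iSup (fun j => f.krylov (g (Pi.single j 1))) j))
      (span_mono (singleton_subset_iff.2 ⟨j, rfl⟩))

theorem span_range_le_reachableSubspace :
    span 𝕜 (range fun j => g (Pi.single j 1)) ≤ reachableSubspace f g :=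
  span_le.2 <| range_subset_iff.2 fun j => by
    simpa using pow_apply_single_mem_reachableSubspace f g 0 j

variable {f g}

theorem exists_finset_card_le_and_le_map_sup_span [FiniteDimensional 𝕜 V] {s : ℕ}
    (hs : min m (finrank 𝕜 (LinearMap.ker f)) ≤ s) :
    ∃ S : Finset (Fin m), S.card ≤ s ∧ reachableSubspace f g ≤
      (reachableSubspace f g).map f ⊔ span 𝕜 ((fun j => g (Pi.single j 1)) '' S) := by
  rcases min_le_iff.1 hs with hm | hker
  · refine ⟨Finset.univ, by simpa using hm, ?_⟩
    simpa using reachableSubspace_le_map_sup_span f g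
  obtain ⟨S, hcard, hspan⟩ := exists_finset_card_le_and_span_range_le_sup
    ((reachableSubspace f g).map f) fun j => g (Pi.single j 1)
  refine ⟨S, hcard.trans ?_,
    (reachableSubspace_le_map_sup_span f g).trans (sup_le le_sup_left hspan)⟩
  have hsub := finrank_mono (map_mono (f := ((reachableSubspace f g).map f).mkQ)
    (span_range_le_reachableSubspace f g))
  have hquot := finrank_map_mkQ_add_finrank (map_reachableSubspace_le f g)
  have hker' := finrank_le_finrank_map_add_finrank_ker f (reachableSubspace f g)
  omega

theorem iSup_map_pow_span_le_range_scheduleMap_const (S : Finset (Fin m)) (c : ℕ) :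
    ⨆ i < c, (span 𝕜 ((fun j => g (Pi.single j 1)) '' S)).map (f ^ i) ≤
      LinearMap.range (scheduleMap f g fun _ : Fin c => S) := by
  refine iSup₂_le fun i hi => ?_
  rw [map_span, span_le]
  rintro _ ⟨_, ⟨j, hj, rfl⟩, rfl⟩
  have := pow_apply_mem_range_scheduleMap (f := f) (g := g) (σ := fun _ : Fin c => S)
    (k := ⟨c - 1 - i, by omega⟩) hj
  rwa [show c - 1 - (c - 1 - i) = i by omega] at this

theorem map_pow_reachableSubspace_le_range_scheduleMap_divNat [FiniteDimensional 𝕜 V] :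
    (reachableSubspace f g).map (f ^ (m * finrank 𝕜 V)) ≤
      LinearMap.range (scheduleMap f g fun k : Fin (m * finrank 𝕜 V) => {k.divNat}) := by
  rw [reachableSubspace, Submodule.map_iSup]
  refine iSup_le fun j => ?_
  have hj : (m - 1 - j) * finrank 𝕜 V + finrank 𝕜 V * j + finrank 𝕜 V = m * finrank 𝕜 V := by
    conv_rhs => rw [show m = (m - 1 - j) + j + 1 by omega]
    ring
  refine (map_pow_antitone (f.map_krylov_le _)
    (show (m - 1 - j) * finrank 𝕜 V ≤ m * finrank 𝕜 V by omega)).trans ?_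
  dsimp only
  rw [f.krylov_eq_span_pow_lt, map_span, span_le]
  rintro _ ⟨_, ⟨i, rfl⟩, rfl⟩
  have := pow_apply_mem_range_scheduleMap (f := f) (g := g)
    (σ := fun k : Fin (m * finrank 𝕜 V) => {k.divNat}) (k := finProdFinEquiv (j, i.rev))
    (j := j) (Finset.mem_singleton.2
      (congrArg Prod.fst (finProdFinEquiv.symm_apply_apply (j, i.rev))).symm)
  rwa [show m * finrank 𝕜 V - 1 - finProdFinEquiv (j, i.rev) = (m - 1 - j) * finrank 𝕜 V + i by
      rw [finProdFinEquiv_apply_val, Fin.val_rev]; have := i.isLt; dsimp only; omega,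
    pow_add, Module.End.mul_apply] at this

theorem exists_schedule_of_le_map_sup_span [FiniteDimensional 𝕜 V] {s : ℕ} (hs : 0 < s)
    {S : Finset (Fin m)} (hS : S.card ≤ s) (h : reachableSubspace f g ≤
      (reachableSubspace f g).map f ⊔ span 𝕜 ((fun j => g (Pi.single j 1)) '' S)) :
    ∃ K, 0 < K ∧ ∃ σ : Fin K → Finset (Fin m), (∀ k, (σ k).card ≤ s) ∧
      reachableSubspace f g ≤ LinearMap.range (scheduleMap f g σ) := by
  obtain ⟨c₀, hc₀⟩ := exists_map_pow_eq (map_reachableSubspace_le f g)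
  have hstable : (reachableSubspace f g).map (f ^ (c₀ + 1)) =
      ((reachableSubspace f g).map (f ^ (m * finrank 𝕜 V))).map (f ^ (c₀ + 1)) := by
    rw [← Submodule.map_comp, ← Module.End.mul_eq_comp, ← pow_add, hc₀ (c₀ + 1) (by omega),
      hc₀ (c₀ + 1 + m * finrank 𝕜 V) (by omega)]
  -- `c₀ + 1` rather than `c₀` keeps the horizon positive
  refine ⟨m * finrank 𝕜 V + (c₀ + 1), by omega,
    Fin.append (fun k : Fin (m * finrank 𝕜 V) => {k.divNat}) fun _ : Fin (c₀ + 1) => S,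
    Fin.addCases (fun _ => by rw [Fin.append_left, Finset.card_singleton]; exact hs)
      (fun _ => by rw [Fin.append_right]; exact hS), ?_⟩
  calc reachableSubspace f g
      ≤ (reachableSubspace f g).map (f ^ (c₀ + 1)) ⊔ ⨆ i < c₀ + 1, (span 𝕜 _).map (f ^ i) :=
        le_map_pow_sup_iSup_of_le_map_sup h _
    _ ≤ _ := by
        rw [hstable]
        exact sup_le_sup (map_mono map_pow_reachableSubspace_le_range_scheduleMap_divNat)
          (iSup_map_pow_span_le_range_scheduleMap_const S _)
    _ ≤ _ := map_sup_range_le_range_scheduleMap_append _ _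

end LinearControl

namespace Matrix

open LinearControl

theorem sub_rank_eq_finrank_ker_toLin' {𝕜 : Type*} [Field 𝕜] {N : ℕ}
    (A : Matrix (Fin N) (Fin N) 𝕜) :
    N - A.rank = finrank 𝕜 (LinearMap.ker (toLin' A)) := by
  have := LinearMap.finrank_range_add_finrank_ker (toLin' A)
  rw [toLin'_apply', finrank_fin_fun] at this
  rw [rank, toLin'_apply']
  omega

variable {N m n : ℕ} (A : Matrix (Fin N) (Fin N) ℝ) (B : Matrix (Fin N) (Fin m) ℝ)

theorem col_ctrbMat (p : Fin N × Fin m) :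
    (ctrbMat A B).col p = (toLin' A ^ (N - 1 - (p.1 : ℕ))) (toLin' B (Pi.single p.2 1)) := by
  rw [← toLin'_pow, toLin'_apply, toLin'_apply, mulVec_single_one]
  ext i
  simp [ctrbMat, mul_apply, mulVec, dotProduct]

theorem range_toLin'_ctrbMat_le :
    LinearMap.range (toLin' (ctrbMat A B)) ≤ reachableSubspace (toLin' A) (toLin' B) := by
  rw [toLin'_apply', range_mulVecLin, span_le]
  rintro _ ⟨p, rfl⟩
  rw [col_ctrbMat]
  exact pow_apply_single_mem_reachableSubspace _ _ _ _

theorem map_toLin'_reachableSubspace_eq_top {C : Matrix (Fin n) (Fin N) ℝ}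
    (h : (C * ctrbMat A B).rank = n) :
    (reachableSubspace (toLin' A) (toLin' B)).map (toLin' C) = ⊤ := by
  have htop : LinearMap.range (toLin' (C * ctrbMat A B)) = ⊤ :=
    eq_top_of_finrank_eq (by rw [finrank_fin_fun]; exact h)
  rw [toLin'_mul, LinearMap.range_comp] at htop
  exact top_unique (htop.ge.trans (map_mono (range_toLin'_ctrbMat_le A B)))

end Matrix

open LinearControl

/-- If `rank(C·W) = n` and `s ≥ min{m, N − rank(A)}`, then the system is output
`s`-sparse controllable (in particular, for invertible `A`, output controllability
implies output `s`-sparse controllability for every `s ≥ 1`). -/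
theorem output_sparse_controllable_of_rank_bound {N m n : ℕ}
    (A : Matrix (Fin N) (Fin N) ℝ) (B : Matrix (Fin N) (Fin m) ℝ)
    (C : Matrix (Fin n) (Fin N) ℝ) (s : ℕ) (hs : 0 < s)
    (hrank : (C * ctrbMat A B).rank = n)
    (hbound : min m (N - A.rank) ≤ s) :
    OutputSparseControllable A B C s := by
  rw [sub_rank_eq_finrank_ker_toLin'] at hbound
  obtain ⟨S, hS, hSle⟩ := exists_finset_card_le_and_le_map_sup_span (g := toLin' B) hbound
  obtain ⟨K, hK, σ, hσ, hle⟩ := exists_schedule_of_le_map_sup_span hs hS hSle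
  have hsurj : (LinearMap.range (scheduleMap (toLin' A) (toLin' B) σ)).map (toLin' C) = ⊤ :=
    top_unique ((map_toLin'_reachableSubspace_eq_top A B hrank).ge.trans (map_mono hle))
  intro x0 yf
  obtain ⟨_, ⟨w, rfl⟩, hw⟩ : yf - C *ᵥ (A ^ K *ᵥ x0) ∈
      (LinearMap.range (scheduleMap (toLin' A) (toLin' B) σ)).map (toLin' C) := hsurj ▸ mem_top
  refine ⟨K, hK, fun k => supportMask (σ k) (w k), fun k => ?_, ?_⟩
  · exact (ncard_le_ncard (support_supportMask_subset _ _) (Finset.finite_toSet _)).trans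
      ((ncard_coe_finset _).trans_le (hσ k))
  · simp only [scheduleMap_apply, ← toLin'_pow, toLin'_apply] at hw
    rw [mulVec_add, hw, sub_add_cancel]
end

section
/- For the controllability matrix W of (A, B) and its Kalman decomposition via an orthogonal matrix Q = [Q̃, R] with W = Q̃ W̃ (W̃ full row rank r = rank W), one has rank(C·A^i·W) = rank(C·Q̃·Ã^i) for every i ≥ 0, where Ã is the r×r upper-left block of Qᵀ A Q. -/
open Matrix

/-!
Since `QᵀAQ` is block upper triangular and `Q` is orthogonal, the columns of `Q̃` span an
`A`-invariant subspace on which `A` acts by `Ã`: `A Q̃ = Q̃ Ã`, hence `Aⁱ W = Q̃ Ãⁱ W̃`.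
As `W̃` has full row rank it is surjective, so right multiplication by it preserves rank.
-/

namespace Matrix

lemma rank_mul_eq_left_of_rank_eq_card {K : Type*} [Field K] {l m n : Type*} [Fintype m]
    [Fintype n] (X : Matrix l m K) (W : Matrix m n K) (hW : W.rank = Fintype.card m) :
    (X * W).rank = X.rank := by
  have hsurj : LinearMap.range W.mulVecLin = ⊤ :=
    Submodule.eq_top_of_finrank_eq (by rw [← rank, hW, Module.finrank_fintype_fun_eq_card])
  rw [rank, rank, mulVecLin_mul, LinearMap.range_comp_of_range_eq_top _ hsurj]

lemma mul_submatrix_castLE_of_lower_left_eq_zero {R : Type*} [NonUnitalNonAssocSemiring R]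
    {l : Type*} {N r : ℕ} (hrN : r ≤ N) (P : Matrix l (Fin N) R) (M : Matrix (Fin N) (Fin N) R)
    (hM : ∀ i j : Fin N, r ≤ (i : ℕ) → (j : ℕ) < r → M i j = 0) :
    (P * M).submatrix id (Fin.castLE hrN)
      = P.submatrix id (Fin.castLE hrN) * M.submatrix (Fin.castLE hrN) (Fin.castLE hrN) := by
  ext i j
  refine (Fintype.sum_of_injective _ (Fin.castLE_injective hrN) _ _ ?_ fun _ => rfl).symm
  intro k hk
  have hkr : r ≤ (k : ℕ) := by
    by_contra! h
    exact hk ⟨⟨k, h⟩, rfl⟩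
  exact mul_eq_zero_of_right _ (hM k _ hkr (by simp))

lemma pow_mul_eq_mul_pow_of_mul_eq_mul {R : Type*} [Semiring R] {m n : Type*} [Fintype m]
    [DecidableEq m] [Fintype n] [DecidableEq n] {A : Matrix m m R} {X : Matrix m n R}
    {B : Matrix n n R} (h : A * X = X * B) (i : ℕ) : A ^ i * X = X * B ^ i := by
  induction i with
  | zero => simp
  | succ i ih => rw [pow_succ, pow_succ, Matrix.mul_assoc, h, ← Matrix.mul_assoc, ih,
      Matrix.mul_assoc]

end Matrix

theorem rank_CAiW_eq_rank_CQtAti_general {N m n r : ℕ}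
    (A : Matrix (Fin N) (Fin N) ℝ) (B : Matrix (Fin N) (Fin m) ℝ)
    (C : Matrix (Fin n) (Fin N) ℝ)
    (hrN : r ≤ N)
    (Q : Matrix (Fin N) (Fin N) ℝ) (hQ : Qᵀ * Q = 1)
    (Wt : Matrix (Fin r) (Fin N × Fin m) ℝ) (hWt : Wt.rank = r)
    (hW : ctrbMat A B = (Q.submatrix id (Fin.castLE hrN)) * Wt)
    (htri : ∀ i j : Fin N, r ≤ (i : ℕ) → (j : ℕ) < r → (Qᵀ * A * Q) i j = 0) :
    ∀ i : ℕ,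
      (C * A ^ i * ctrbMat A B).rank
        = (C * (Q.submatrix id (Fin.castLE hrN))
            * ((Qᵀ * A * Q).submatrix (Fin.castLE hrN) (Fin.castLE hrN)) ^ i).rank := by
  intro i
  set Qt := Q.submatrix id (Fin.castLE hrN)
  set At := (Qᵀ * A * Q).submatrix (Fin.castLE hrN) (Fin.castLE hrN)
  have hAQ : A * Q = Q * (Qᵀ * A * Q) := by
    rw [← Matrix.mul_assoc, ← Matrix.mul_assoc, mul_eq_one_comm.mp hQ, Matrix.one_mul]
  have hAQt : A * Qt = Qt * At := by
    rw [← mul_submatrix_castLE_of_lower_left_eq_zero hrN Q _ htri, ← hAQ,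
      ← submatrix_id_id A, ← submatrix_mul _ _ _ _ _ Function.bijective_id, submatrix_id_id]
  calc (C * A ^ i * ctrbMat A B).rank
      = ((C * Qt * At ^ i) * Wt).rank := by
        rw [hW, Matrix.mul_assoc, ← Matrix.mul_assoc (A ^ i),
          pow_mul_eq_mul_pow_of_mul_eq_mul hAQt, Matrix.mul_assoc, Matrix.mul_assoc,
          Matrix.mul_assoc]
    _ = (C * Qt * At ^ i).rank :=
        rank_mul_eq_left_of_rank_eq_card _ Wt (by rw [hWt, Fintype.card_fin])

/-- Via the Kalman decomposition `W = Q̃ W̃` (with `Q = [Q̃, R]` orthogonal, `W̃` of full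
row rank `r = rank W`, and `Qᵀ A Q` block upper triangular with upper-left block `Ã`),
one has `rank(C·A^i·W) = rank(C·Q̃·Ã^i)` for every `i ≥ 0`. -/
theorem rank_CAiW_eq_rank_CQtAti {N m n r : ℕ}
    (A : Matrix (Fin N) (Fin N) ℝ) (B : Matrix (Fin N) (Fin m) ℝ)
    (C : Matrix (Fin n) (Fin N) ℝ)
    (hrN : r ≤ N) (hr : (ctrbMat A B).rank = r)
    (Q : Matrix (Fin N) (Fin N) ℝ) (hQ : Qᵀ * Q = 1)
    (Wt : Matrix (Fin r) (Fin N × Fin m) ℝ) (hWt : Wt.rank = r)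
    (hW : ctrbMat A B = (Q.submatrix id (Fin.castLE hrN)) * Wt)
    (htri : ∀ i j : Fin N, r ≤ (i : ℕ) → (j : ℕ) < r → (Qᵀ * A * Q) i j = 0) :
    ∀ i : ℕ,
      (C * A ^ i * ctrbMat A B).rank
        = (C * (Q.submatrix id (Fin.castLE hrN))
            * ((Qᵀ * A * Q).submatrix (Fin.castLE hrN) (Fin.castLE hrN)) ^ i).rank :=
  rank_CAiW_eq_rank_CQtAti_general A B C hrN Q hQ Wt hWt hW htri
end
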